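/- arXiv:math/0702648 — 2 statements merged into one kernel-verified Lean document; each statement's English description precedes it below -/
import Mathlib

section
/- Let ℓ : [B,∞) → (0,∞) be a slowly varying, locally bounded measurable function with ∫_B^∞ ℓ(s)/s ds = ∞, and define ℓ̃(x) := ∫_B^x ℓ(s)/s ds. Then ℓ(x)/ℓ̃(x) → 0 as x → ∞. -/
/-!
After the substitution `s = x u`, `(∫ s in Ioc (lam x) x, ℓ s / s) / ℓ x` is the integral over
`u ∈ (lam, 1]` of `ℓ (x u) / (u ℓ x)`, which tends pointwise to `u⁻¹` by slow variation. Fatou's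
lemma therefore bounds its eventual values below by anything less than `∫ u in Ioc lam 1, u⁻¹ =
-log lam`, and letting `lam → 0` gives `ℓ̃ x / ℓ x → ∞`. Moving the lower limit `B` to a positive
point changes `ℓ̃` by a constant, which is negligible because `ℓ̃ → ∞`.
-/

open Filter MeasureTheory Set Topology Asymptotics

theorem eventually_lt_integral_of_ae_tendsto {α ι : Type*} [MeasurableSpace α] {μ : Measure α}
    {l : Filter ι} [l.IsCountablyGenerated] {F : ι → α → ℝ} {g : α → ℝ}
    (hF_int : ∀ᶠ i in l, Integrable (F i) μ) (hF_nonneg : ∀ᶠ i in l, 0 ≤ᵐ[μ] F i)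
    (hlim : ∀ᵐ a ∂μ, Tendsto (fun i => F i a) l (𝓝 (g a))) (hg : Integrable g μ)
    {M : ℝ} (hM : M < ∫ a, g a ∂μ) : ∀ᶠ i in l, M < ∫ a, F i a ∂μ := by
  by_contra h
  obtain ⟨x, hx, hgood⟩ := exists_seq_forall_of_frequently
    ((not_eventually.1 h).and_eventually (hF_int.and hF_nonneg))
  have hle : ∀ n, ∫ a, F (x n) a ∂μ ≤ M := fun n => not_lt.1 (hgood n).1
  have hM0 : 0 ≤ M := (integral_nonneg_of_ae (hgood 0).2.2).trans (hle 0)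
  have hg_nonneg : 0 ≤ᵐ[μ] g := by
    filter_upwards [hlim, ae_all_iff.2 fun n => (hgood n).2.2] with a ha hna
    exact ge_of_tendsto' (ha.comp hx) hna
  have hfatou : ENNReal.ofReal (∫ a, g a ∂μ) ≤ ENNReal.ofReal M :=
    calc ENNReal.ofReal (∫ a, g a ∂μ)
        = ∫⁻ a, liminf (fun n => ENNReal.ofReal (F (x n) a)) atTop ∂μ := by
          rw [ofReal_integral_eq_lintegral_ofReal hg hg_nonneg]
          refine lintegral_congr_ae ?_
          filter_upwards [hlim] with a ha
          exact ((ENNReal.continuous_ofReal.tendsto _).comp (ha.comp hx)).liminf_eq.symm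
      _ ≤ liminf (fun n => ∫⁻ a, ENNReal.ofReal (F (x n) a) ∂μ) atTop :=
          lintegral_liminf_le' fun n => (hgood n).2.1.aemeasurable.ennreal_ofReal
      _ = liminf (fun n => ENNReal.ofReal (∫ a, F (x n) a ∂μ)) atTop := by
          simp_rw [ofReal_integral_eq_lintegral_ofReal (hgood _).2.1 (hgood _).2.2]
      _ ≤ ENNReal.ofReal M := by
          refine (liminf_le_liminf (Eventually.of_forall fun n => ?_)).trans_eq (liminf_const _)
          exact ENNReal.ofReal_le_ofReal (hle n)
  exact hM.not_ge ((ENNReal.ofReal_le_ofReal_iff hM0).1 hfatou)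

theorem setIntegral_Ioc_comp_mul_div_self (f : ℝ → ℝ) {x a b : ℝ} (hx : 0 < x) (hab : a ≤ b) :
    ∫ u in Ioc a b, f (x * u) / u = ∫ s in Ioc (x * a) (x * b), f s / s := by
  rw [← intervalIntegral.integral_of_le hab,
    ← intervalIntegral.integral_of_le (mul_le_mul_of_nonneg_left hab hx.le),
    ← intervalIntegral.smul_integral_comp_mul_left, smul_eq_mul,
    ← intervalIntegral.integral_const_mul]
  refine intervalIntegral.integral_congr fun u _ => ?_
  rcases eq_or_ne u 0 with rfl | hu
  · simp
  · field_simp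

theorem IntegrableOn.comp_mul_div_self {f : ℝ → ℝ} {x a b : ℝ} (hx : 0 < x) (hab : a ≤ b)
    (hf : IntegrableOn (fun s => f s / s) (Ioc (x * a) (x * b))) :
    IntegrableOn (fun u => f (x * u) / u) (Ioc a b) := by
  have h := ((intervalIntegrable_iff_integrableOn_Ioc_of_le
    (mul_le_mul_of_nonneg_left hab hx.le)).2 hf).comp_mul_left (c := x)
  rw [mul_div_cancel_left₀ _ hx.ne', mul_div_cancel_left₀ _ hx.ne'] at h
  refine ((intervalIntegrable_iff_integrableOn_Ioc_of_le hab).1 (h.const_mul x)).congr_fun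
    (fun u _ => ?_) measurableSet_Ioc
  rcases eq_or_ne u 0 with rfl | hu
  · simp
  · field_simp

theorem integrableOn_Ioc_of_tendsto_integral_atTop {f : ℝ → ℝ} {a : ℝ}
    (h : Tendsto (fun x => ∫ s in Ioc a x, f s) atTop atTop) (x : ℝ) :
    IntegrableOn f (Ioc a x) := by
  obtain ⟨y, hy, hxy⟩ := ((h.eventually_ne_atTop 0).and (eventually_ge_atTop x)).exists
  exact IntegrableOn.mono_set (Integrable.of_integral_ne_zero hy) (Ioc_subset_Ioc_right hxy)

theorem isEquivalent_integral_Ioc_of_tendsto_atTop {f : ℝ → ℝ} {a b : ℝ} (hab : a ≤ b)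
    (h : Tendsto (fun x => ∫ s in Ioc a x, f s) atTop atTop) :
    (fun x => ∫ s in Ioc b x, f s) ~[atTop] fun x => ∫ s in Ioc a x, f s := by
  have hsplit : (fun _ => -∫ s in Ioc a b, f s) =ᶠ[atTop]
      (fun x => ∫ s in Ioc b x, f s) - fun x => ∫ s in Ioc a x, f s := by
    filter_upwards [eventually_ge_atTop b] with x hx
    rw [Pi.sub_apply, ← Ioc_union_Ioc_eq_Ioc hab hx, setIntegral_union
      (Ioc_disjoint_Ioc_of_le le_rfl) measurableSet_Ioc
      (integrableOn_Ioc_of_tendsto_integral_atTop h b)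
      ((integrableOn_Ioc_of_tendsto_integral_atTop h x).mono_set (Ioc_subset_Ioc_left hab))]
    ring
  exact (isLittleO_const_left.2 (Or.inr (tendsto_norm_atTop_atTop.comp h))).congr' hsplit
    EventuallyEq.rfl

theorem eventually_lt_integral_Ioc_mul_div {B : ℝ} {ℓ : ℝ → ℝ} (hpos : ∀ x, B ≤ x → 0 < ℓ x)
    (hint : ∀ x, IntegrableOn (fun s => ℓ s / s) (Ioc B x))
    (hsv : ∀ lam : ℝ, 0 < lam → Tendsto (fun x => ℓ (lam * x) / ℓ x) atTop (𝓝 1))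
    {lam M : ℝ} (hlam0 : 0 < lam) (hlam1 : lam < 1) (hM : M < -Real.log lam) :
    ∀ᶠ x in atTop, M < (∫ s in Ioc (lam * x) x, ℓ s / s) / ℓ x := by
  have hwindow : ∀ᶠ x in atTop, B ≤ lam * x ∧ 0 < x :=
    ((tendsto_id.const_mul_atTop hlam0).eventually_ge_atTop B).and (eventually_gt_atTop 0)
  have hlim : ∀ᵐ u ∂volume.restrict (Ioc lam 1),
      Tendsto (fun x => ℓ (x * u) / u / ℓ x) atTop (𝓝 u⁻¹) := by
    filter_upwards [ae_restrict_mem measurableSet_Ioc] with u hu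
    rw [← one_div]
    refine ((hsv u (hlam0.trans hu.1)).div_const u).congr fun x => ?_
    rw [mul_comm, div_right_comm]
  have hlog : ∫ u in Ioc lam 1, u⁻¹ = -Real.log lam := by
    rw [← intervalIntegral.integral_of_le hlam1.le, integral_inv_of_pos hlam0 one_pos, one_div,
      Real.log_inv]
  have hfatou : ∀ᶠ x in atTop, M < ∫ u in Ioc lam 1, ℓ (x * u) / u / ℓ x := by
    refine eventually_lt_integral_of_ae_tendsto ?_ ?_ hlim ?_ (hlog ▸ hM)
    · filter_upwards [hwindow] with x ⟨hBx, hx⟩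
      refine (IntegrableOn.comp_mul_div_self hx hlam1.le ?_).div_const _
      rw [mul_one, mul_comm]
      exact (hint x).mono_set (Ioc_subset_Ioc_left hBx)
    · filter_upwards [hwindow] with x ⟨hBx, hx⟩
      filter_upwards [ae_restrict_mem measurableSet_Ioc] with u hu
      have := hpos (x * u) (hBx.trans (by rw [mul_comm lam]; gcongr; exact hu.1.le))
      have := hpos x (hBx.trans (mul_le_of_le_one_left hx.le hlam1.le))
      have := hlam0.trans hu.1
      positivity
    · exact (continuousOn_inv₀.mono fun u hu => (hlam0.trans_le hu.1).ne').integrableOn_Icc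
        |>.mono_set Ioc_subset_Icc_self
  filter_upwards [hwindow, hfatou] with x ⟨_, hx⟩ hMx
  rwa [integral_div, setIntegral_Ioc_comp_mul_div_self ℓ hx hlam1.le, mul_one, mul_comm] at hMx

theorem tendsto_integral_Ioc_div_self_div_atTop {B : ℝ} {ℓ : ℝ → ℝ} (hB : 0 < B)
    (hpos : ∀ x, B ≤ x → 0 < ℓ x)
    (hint : ∀ x, IntegrableOn (fun s => ℓ s / s) (Ioc B x))
    (hsv : ∀ lam : ℝ, 0 < lam → Tendsto (fun x => ℓ (lam * x) / ℓ x) atTop (𝓝 1)) :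
    Tendsto (fun x => (∫ s in Ioc B x, ℓ s / s) / ℓ x) atTop atTop := by
  refine tendsto_atTop.2 fun M => ?_
  set lam := Real.exp (-(max M 0 + 1))
  have hlam1 : lam < 1 := Real.exp_lt_one_iff.2 (neg_neg_of_pos (by positivity))
  have hM : M < -Real.log lam := by
    rw [Real.log_exp, neg_neg]
    exact (le_max_left M 0).trans_lt (lt_add_one _)
  have hlam0 : 0 < lam := Real.exp_pos _
  filter_upwards [eventually_lt_integral_Ioc_mul_div hpos hint hsv hlam0 hlam1 hM,
    (tendsto_id.const_mul_atTop hlam0).eventually_ge_atTop B, eventually_gt_atTop 0]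
    with x hMx hBx hx
  have hℓx := hpos x (hBx.trans (mul_le_of_le_one_left hx.le hlam1.le))
  refine hMx.le.trans (div_le_div_of_nonneg_right
    (setIntegral_mono_set (hint x) ?_ (Ioc_subset_Ioc_left hBx).eventuallyLE) hℓx.le)
  filter_upwards [ae_restrict_mem measurableSet_Ioc] with s hs
  have := hpos s hs.1.le
  have := hB.trans_le hs.1.le
  positivity

theorem slowly_varying_ratio_tendsto_zero_general (B : ℝ) (ℓ : ℝ → ℝ)
    (hpos : ∀ x, B ≤ x → 0 < ℓ x)
    (hsv : ∀ lam : ℝ, 0 < lam →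
      Tendsto (fun x => ℓ (lam * x) / ℓ x) atTop (nhds 1))
    (hdiv : Tendsto (fun x => ∫ s in Set.Ioc B x, ℓ s / s) atTop atTop) :
    Tendsto (fun x => ℓ x / ∫ s in Set.Ioc B x, ℓ s / s) atTop (nhds 0) := by
  have hB : B ≤ max B 1 := le_max_left _ _
  have hratio := tendsto_integral_Ioc_div_self_div_atTop (lt_max_of_lt_right one_pos)
    (fun x hx => hpos x (hB.trans hx))
    (fun x => (integrableOn_Ioc_of_tendsto_integral_atTop hdiv x).mono_set
      (Ioc_subset_Ioc_left hB)) hsv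
  have hequiv := isEquivalent_integral_Ioc_of_tendsto_atTop hB hdiv
  refine (IsEquivalent.refl.div hequiv).tendsto_nhds ?_
  exact hratio.inv_tendsto_atTop.congr fun x => inv_div _ _

theorem slowly_varying_ratio_tendsto_zero (B : ℝ) (ℓ : ℝ → ℝ)
    (hmeas : Measurable ℓ)
    (hpos : ∀ x, B ≤ x → 0 < ℓ x)
    (hloc : ∀ x : ℝ, ∃ C : ℝ, ∀ y ∈ Set.Icc B x, ℓ y ≤ C)
    (hsv : ∀ lam : ℝ, 0 < lam →
      Tendsto (fun x => ℓ (lam * x) / ℓ x) atTop (nhds 1))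
    (hdiv : Tendsto (fun x => ∫ s in Set.Ioc B x, ℓ s / s) atTop atTop) :
    Tendsto (fun x => ℓ x / ∫ s in Set.Ioc B x, ℓ s / s) atTop (nhds 0) :=
  slowly_varying_ratio_tendsto_zero_general B ℓ hpos hsv hdiv
end

section
/- Let ℓ be a slowly varying, locally bounded measurable function on [B,∞) with ∫_B^∞ ℓ(s)/s ds = ∞. Then ℓ̃(x) := ∫_B^x ℓ(s)/s ds is itself slowly varying. -/
/-!
Write `ℓ̃ x = ∫_B^x ℓ(s)/s ds`. Substituting `s = t x` gives
`ℓ̃ x / ℓ x ≥ ∫_δ^1 ℓ(t x)/ℓ(x) dt/t` for large `x`, and by Fatou's lemma the right side has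
`liminf ≥ ∫_δ^1 dt/t = log (1/δ)`; letting `δ → 0` shows `ℓ = o(ℓ̃)`. For `λ > 1` this gives
`ℓ̃(λx) - ℓ̃(x) = ∫_x^{λx} ℓ(s)/s ds ≤ o(ℓ̃(λx)) · log λ`, hence `ℓ̃(λx)/ℓ̃(x) → 1`;
the case `λ < 1` follows by inversion.
-/

open Filter MeasureTheory Set Topology

def SlowlyVarying (g : ℝ → ℝ) : Prop :=
  ∀ lam : ℝ, 0 < lam → Tendsto (fun x => g (lam * x) / g x) atTop (𝓝 1)

theorem SlowlyVarying.of_one_lt {g : ℝ → ℝ} (hg : ∀ᶠ x in atTop, g x ≠ 0)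
    (h : ∀ lam : ℝ, 1 < lam → Tendsto (fun x => g (lam * x) / g x) atTop (𝓝 1)) :
    SlowlyVarying g := by
  intro lam hlam
  rcases lt_trichotomy lam 1 with hlt | rfl | hgt
  · have hscale := (h lam⁻¹ ((one_lt_inv₀ hlam).2 hlt)).comp
      (tendsto_id.const_mul_atTop hlam)
    simpa [Function.comp_def, ← mul_assoc, hlam.ne'] using hscale.inv₀ one_ne_zero
  · exact tendsto_const_nhds.congr' (hg.mono fun x hx => by simp [hx])
  · exact h lam hgt

/-- A non-integrable set integral is `0`, so an unbounded family of them forces integrability. -/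
theorem integrableOn_Ioc_of_tendsto_setIntegral_atTop {f : ℝ → ℝ} {a : ℝ}
    (hf : Tendsto (fun x => ∫ s in Ioc a x, f s) atTop atTop) (x : ℝ) :
    IntegrableOn f (Ioc a x) := by
  obtain ⟨y, hxy, hy⟩ := ((eventually_ge_atTop x).and (hf.eventually_ne_atTop 0)).exists
  exact IntegrableOn.mono_set (.of_integral_ne_zero hy) (Ioc_subset_Ioc_right hxy)

theorem setIntegral_Ioc_sub_setIntegral_Ioc {f : ℝ → ℝ} {a x y : ℝ}
    (hf : IntegrableOn f (Ioc a y)) (hax : a ≤ x) (hxy : x ≤ y) :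
    (∫ s in Ioc a y, f s) - ∫ s in Ioc a x, f s = ∫ s in Ioc x y, f s := by
  have hunion := setIntegral_union (Ioc_disjoint_Ioc_of_le le_rfl) measurableSet_Ioc
    (hf.mono_set (Ioc_subset_Ioc_right hxy)) (hf.mono_set (Ioc_subset_Ioc_left hax))
  rw [Ioc_union_Ioc_eq_Ioc hax hxy] at hunion
  exact sub_eq_of_eq_add' hunion

theorem integrableOn_Ioc_comp_mul_right {g : ℝ → ℝ} {a b u : ℝ} (hu : 0 < u) (hab : a ≤ b)
    (hg : IntegrableOn g (Ioc (a * u) (b * u))) :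
    IntegrableOn (fun t => g (t * u)) (Ioc a b) := by
  rw [← intervalIntegrable_iff_integrableOn_Ioc_of_le hab]
  rw [← intervalIntegrable_iff_integrableOn_Ioc_of_le
    (mul_le_mul_of_nonneg_right hab hu.le)] at hg
  simpa [hu.ne'] using hg.comp_mul_right (c := u)

theorem setIntegral_Ioc_comp_mul_right_div {g : ℝ → ℝ} {a b u : ℝ} (hu : 0 < u)
    (hab : a ≤ b) :
    ∫ t in Ioc a b, g (t * u) / t = ∫ s in Ioc (a * u) (b * u), g s / s := by
  have hscale : (fun t => g (t * u) / t) = fun t => u * (g (t * u) / (t * u)) := by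
    ext t
    rcases eq_or_ne t 0 with rfl | ht
    · simp
    · field_simp
  rw [← intervalIntegral.integral_of_le hab, hscale, intervalIntegral.integral_const_mul,
    intervalIntegral.integral_comp_mul_right (fun s => g s / s) hu.ne',
    smul_eq_mul, ← mul_assoc, mul_inv_cancel₀ hu.ne', one_mul,
    intervalIntegral.integral_of_le (mul_le_mul_of_nonneg_right hab hu.le)]

theorem integrableOn_Ioc_inv {x y : ℝ} (hx : 0 < x) :
    IntegrableOn (fun s : ℝ => s⁻¹) (Ioc x y) :=
  (continuousOn_inv₀.mono fun _ hs => (hx.trans_le hs.1).ne').integrableOn_Icc.mono_set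
    Ioc_subset_Icc_self

theorem setIntegral_Ioc_div_le_mul_log {g : ℝ → ℝ} {x y C : ℝ} (hx : 0 < x) (hxy : x ≤ y)
    (hg : IntegrableOn (fun s => g s / s) (Ioc x y)) (hC : ∀ s ∈ Ioc x y, g s ≤ C) :
    ∫ s in Ioc x y, g s / s ≤ C * Real.log (y / x) :=
  calc ∫ s in Ioc x y, g s / s ≤ ∫ s in Ioc x y, C * s⁻¹ :=
        setIntegral_mono_on hg ((integrableOn_Ioc_inv hx).const_mul C) measurableSet_Ioc
          fun s hs => div_le_div_of_nonneg_right (hC s hs) (hx.trans hs.1).le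
    _ = C * Real.log (y / x) := by
      rw [integral_const_mul, ← intervalIntegral.integral_of_le hxy,
        integral_inv_of_pos hx (hx.trans_le hxy)]

theorem lintegral_Ioc_ofReal_inv {x y : ℝ} (hx : 0 < x) (hxy : x ≤ y) :
    ∫⁻ t in Ioc x y, ENNReal.ofReal t⁻¹ = ENNReal.ofReal (Real.log (y / x)) := by
  rw [← ofReal_integral_eq_lintegral_ofReal (integrableOn_Ioc_inv hx),
    ← intervalIntegral.integral_of_le hxy, integral_inv_of_pos hx (hx.trans_le hxy)]
  filter_upwards [ae_restrict_mem measurableSet_Ioc] with t ht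
  exact inv_nonneg.2 (hx.trans ht.1).le

noncomputable def ellTilde (B : ℝ) (ℓ : ℝ → ℝ) (x : ℝ) : ℝ :=
  ∫ s in Ioc B x, ℓ s / s

section ellTilde

variable {B : ℝ} {ℓ : ℝ → ℝ}

theorem ellTilde_sub_ellTilde (hdiv : Tendsto (ellTilde B ℓ) atTop atTop) {x y : ℝ}
    (hBx : B ≤ x) (hxy : x ≤ y) :
    ellTilde B ℓ y - ellTilde B ℓ x = ∫ s in Ioc x y, ℓ s / s :=
  setIntegral_Ioc_sub_setIntegral_Ioc (integrableOn_Ioc_of_tendsto_setIntegral_atTop hdiv y)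
    hBx hxy

theorem monotoneOn_ellTilde (hpos : ∀ x, B ≤ x → 0 < ℓ x)
    (hdiv : Tendsto (ellTilde B ℓ) atTop atTop) : MonotoneOn (ellTilde B ℓ) (Ici (max B 0)) := by
  intro x hx y _ hxy
  rw [← sub_nonneg, ellTilde_sub_ellTilde hdiv (le_of_max_le_left hx) hxy]
  refine setIntegral_nonneg measurableSet_Ioc fun s hs => ?_
  have hs' : max B 0 < s := lt_of_le_of_lt hx hs.1
  exact div_nonneg (hpos s (le_of_max_le_left hs'.le)).le (le_of_max_le_right hs'.le)

theorem le_liminf_lintegral_Ioc_ratio (hmeas : Measurable ℓ) (hsv : SlowlyVarying ℓ) {δ : ℝ}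
    (hδ : 0 < δ) (hδ1 : δ ≤ 1) :
    ENNReal.ofReal (Real.log δ⁻¹) ≤
      liminf (fun x => ∫⁻ t in Ioc δ 1, ENNReal.ofReal (ℓ (t * x) / ℓ x / t)) atTop :=
  calc ENNReal.ofReal (Real.log δ⁻¹) = ∫⁻ t in Ioc δ 1, ENNReal.ofReal t⁻¹ := by
        rw [lintegral_Ioc_ofReal_inv hδ hδ1, one_div]
    _ = ∫⁻ t in Ioc δ 1, liminf (fun x => ENNReal.ofReal (ℓ (t * x) / ℓ x / t)) atTop :=
        setLIntegral_congr_fun measurableSet_Ioc fun t ht =>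
          ((ENNReal.tendsto_ofReal (by
            simpa only [one_div] using (hsv t (hδ.trans ht.1)).div_const t)).liminf_eq).symm
    _ ≤ _ := lintegral_liminf_le fun x =>
        (((hmeas.comp (measurable_id.mul_const x)).div_const _).div measurable_id).ennreal_ofReal

theorem lintegral_Ioc_ratio_le_ellTilde_div (hpos : ∀ x, B ≤ x → 0 < ℓ x)
    (hdiv : Tendsto (ellTilde B ℓ) atTop atTop) {δ : ℝ} (hδ : 0 < δ) (hδ1 : δ ≤ 1) :
    ∀ᶠ x in atTop, ∫⁻ t in Ioc δ 1, ENNReal.ofReal (ℓ (t * x) / ℓ x / t) ≤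
      ENNReal.ofReal (ellTilde B ℓ x / ℓ x) := by
  have hscale : Tendsto (fun x => δ * x) atTop atTop := tendsto_id.const_mul_atTop hδ
  filter_upwards [hscale.eventually (hdiv.eventually_ge_atTop 0),
    hscale.eventually_gt_atTop (max B 0)] with x hLδx hδx
  have hδx0 : 0 < δ * x := (le_max_right _ _).trans_lt hδx
  have hx : 0 < x := pos_of_mul_pos_right hδx0 hδ.le
  have hδxx : δ * x ≤ x := mul_le_of_le_one_left hx.le hδ1
  have hBδx : B ≤ δ * x := (le_max_left _ _).trans hδx.le
  have hℓx : 0 < ℓ x := hpos x (hBδx.trans hδxx)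
  have hint : IntegrableOn (fun t => ℓ (t * x) / ℓ x / t) (Ioc δ 1) := by
    have hf := integrableOn_Ioc_comp_mul_right (g := fun s => ℓ s / s) hx hδ1
      (by simpa only [one_mul] using integrableOn_Ioc_of_tendsto_setIntegral_atTop hdiv x
        |>.mono_set (Ioc_subset_Ioc_left hBδx))
    refine IntegrableOn.congr_fun (hf.mul_const (x / ℓ x)) (fun t ht => ?_) measurableSet_Ioc
    have ht : t ≠ 0 := (hδ.trans ht.1).ne'
    field_simp
  have hnonneg : 0 ≤ᵐ[volume.restrict (Ioc δ 1)] fun t => ℓ (t * x) / ℓ x / t := by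
    filter_upwards [ae_restrict_mem measurableSet_Ioc] with t ht
    have htx : δ * x ≤ t * x := mul_le_mul_of_nonneg_right ht.1.le hx.le
    exact div_nonneg (div_nonneg (hpos _ (hBδx.trans htx)).le hℓx.le) (hδ.trans ht.1).le
  calc ∫⁻ t in Ioc δ 1, ENNReal.ofReal (ℓ (t * x) / ℓ x / t)
      = ENNReal.ofReal (∫ t in Ioc δ 1, ℓ (t * x) / ℓ x / t) :=
        (ofReal_integral_eq_lintegral_ofReal hint hnonneg).symm
    _ = ENNReal.ofReal ((ellTilde B ℓ x - ellTilde B ℓ (δ * x)) / ℓ x) := by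
        simp_rw [div_right_comm _ (ℓ x)]
        rw [integral_div, setIntegral_Ioc_comp_mul_right_div hx hδ1, one_mul,
          ellTilde_sub_ellTilde hdiv hBδx hδxx]
    _ ≤ ENNReal.ofReal (ellTilde B ℓ x / ℓ x) :=
        ENNReal.ofReal_le_ofReal (div_le_div_of_nonneg_right (by linarith) hℓx.le)

theorem tendsto_ellTilde_div_atTop (hmeas : Measurable ℓ) (hpos : ∀ x, B ≤ x → 0 < ℓ x)
    (hsv : SlowlyVarying ℓ) (hdiv : Tendsto (ellTilde B ℓ) atTop atTop) :
    Tendsto (fun x => ellTilde B ℓ x / ℓ x) atTop atTop := by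
  refine tendsto_atTop.2 fun M => ?_
  set δ := Real.exp (-(|M| + 1))
  have hδ : 0 < δ := Real.exp_pos _
  have hδ1 : δ ≤ 1 := Real.exp_le_one_iff.2 (by linarith [abs_nonneg M])
  have hM : ENNReal.ofReal M < ENNReal.ofReal (Real.log δ⁻¹) := by
    rw [Real.log_inv, Real.log_exp, neg_neg,
      ENNReal.ofReal_lt_ofReal_iff (by positivity)]
    linarith [le_abs_self M]
  have hliminf := hM.trans_le (le_liminf_lintegral_Ioc_ratio hmeas hsv hδ hδ1)
  filter_upwards [eventually_lt_of_lt_liminf hliminf,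
    lintegral_Ioc_ratio_le_ellTilde_div hpos hdiv hδ hδ1] with x hlower hupper
  exact (ENNReal.ofReal_lt_ofReal_iff'.1 (hlower.trans_le hupper)).1.le

theorem tendsto_ellTilde_increment_div (hpos : ∀ x, B ≤ x → 0 < ℓ x)
    (hdiv : Tendsto (ellTilde B ℓ) atTop atTop)
    (hratio : Tendsto (fun x => ℓ x / ellTilde B ℓ x) atTop (𝓝 0)) {lam : ℝ} (hlam : 1 < lam) :
    Tendsto (fun x => (ellTilde B ℓ (lam * x) - ellTilde B ℓ x) / ellTilde B ℓ (lam * x))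
      atTop (𝓝 0) := by
  have hmono := monotoneOn_ellTilde hpos hdiv
  have hbase : ∀ᶠ x in atTop, max B 0 < x ∧ 0 < ellTilde B ℓ x :=
    (eventually_gt_atTop _).and (hdiv.eventually_gt_atTop 0)
  have hgrow : ∀ᶠ x in atTop, 0 < x ∧ x ∈ Ici (max B 0) ∧ x ≤ lam * x ∧
      ellTilde B ℓ x ≤ ellTilde B ℓ (lam * x) ∧ 0 < ellTilde B ℓ (lam * x) := by
    filter_upwards [hbase] with x ⟨hx, hLx⟩
    have hx0 : 0 < x := (le_max_right _ _).trans_lt hx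
    have hxlx : x ≤ lam * x := le_mul_of_one_le_left hx0.le hlam.le
    have hLxlx := hmono hx.le (hx.le.trans hxlx) hxlx
    exact ⟨hx0, hx.le, hxlx, hLxlx, hLx.trans_le hLxlx⟩
  refine tendsto_order.2 ⟨fun a ha => ?_, fun b hb => ?_⟩
  · filter_upwards [hgrow] with x ⟨_, _, _, hLxlx, hLlx⟩
    exact ha.trans_le (div_nonneg (sub_nonneg.2 hLxlx) hLlx.le)
  · have hlog : 0 < Real.log lam := Real.log_pos hlam
    set ε := b / 2 / Real.log lam
    obtain ⟨N, hN⟩ := eventually_atTop.1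
      ((hratio.eventually_lt_const (by positivity : 0 < ε)).and hbase)
    filter_upwards [hgrow, eventually_ge_atTop N] with x ⟨hx0, hx, hxlx, _, hLlx⟩ hNx
    have hbound : ∀ s ∈ Ioc x (lam * x), ℓ s ≤ ε * ellTilde B ℓ (lam * x) := by
      intro s hs
      obtain ⟨hsε, _, hLs⟩ := hN s (hNx.trans hs.1.le)
      calc ℓ s ≤ ε * ellTilde B ℓ s := ((div_lt_iff₀ hLs).1 hsε).le
        _ ≤ ε * ellTilde B ℓ (lam * x) :=
          mul_le_mul_of_nonneg_left (hmono (hx.trans hs.1.le) (hx.trans hxlx) hs.2)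
            (by positivity)
    have hinc : ellTilde B ℓ (lam * x) - ellTilde B ℓ x ≤
        ε * ellTilde B ℓ (lam * x) * Real.log lam := by
      rw [ellTilde_sub_ellTilde hdiv (le_of_max_le_left hx) hxlx]
      have := setIntegral_Ioc_div_le_mul_log hx0 hxlx
        ((integrableOn_Ioc_of_tendsto_setIntegral_atTop hdiv _).mono_set
          (Ioc_subset_Ioc_left (le_of_max_le_left hx))) hbound
      rwa [mul_div_cancel_right₀ _ hx0.ne'] at this
    calc (ellTilde B ℓ (lam * x) - ellTilde B ℓ x) / ellTilde B ℓ (lam * x)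
        ≤ ε * Real.log lam := by
          rw [div_le_iff₀ hLlx]
          linarith
      _ = b / 2 := div_mul_cancel₀ _ hlog.ne'
      _ < b := half_lt_self hb

theorem tendsto_ellTilde_mul_div_of_one_lt (hpos : ∀ x, B ≤ x → 0 < ℓ x)
    (hdiv : Tendsto (ellTilde B ℓ) atTop atTop)
    (hratio : Tendsto (fun x => ℓ x / ellTilde B ℓ x) atTop (𝓝 0)) {lam : ℝ} (hlam : 1 < lam) :
    Tendsto (fun x => ellTilde B ℓ (lam * x) / ellTilde B ℓ x) atTop (𝓝 1) := by
  have hlim := ((tendsto_ellTilde_increment_div hpos hdiv hratio hlam).const_sub 1).inv₀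
    (by norm_num)
  rw [sub_zero, inv_one] at hlim
  refine hlim.congr' ?_
  have hscale : Tendsto (fun x => lam * x) atTop atTop :=
    tendsto_id.const_mul_atTop (one_pos.trans hlam)
  filter_upwards [hscale.eventually (hdiv.eventually_gt_atTop 0)] with x hLlx
  rw [one_sub_div hLlx.ne', sub_sub_cancel, inv_div]

end ellTilde

theorem integral_of_slowly_varying_is_slowly_varying_general (B : ℝ) (ℓ : ℝ → ℝ)
    (hmeas : Measurable ℓ)
    (hpos : ∀ x, B ≤ x → 0 < ℓ x)
    (hsv : ∀ lam : ℝ, 0 < lam →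
      Tendsto (fun x => ℓ (lam * x) / ℓ x) atTop (nhds 1))
    (hdiv : Tendsto (fun x => ∫ s in Set.Ioc B x, ℓ s / s) atTop atTop) :
    ∀ lam : ℝ, 0 < lam →
      Tendsto (fun x => (∫ s in Set.Ioc B (lam * x), ℓ s / s) /
        ∫ s in Set.Ioc B x, ℓ s / s) atTop (nhds 1) := by
  have hratio : Tendsto (fun x => ℓ x / ellTilde B ℓ x) atTop (𝓝 0) := by
    simpa only [Pi.inv_def, inv_div] using
      (tendsto_ellTilde_div_atTop hmeas hpos hsv hdiv).inv_tendsto_atTop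
  show SlowlyVarying (ellTilde B ℓ)
  exact .of_one_lt ((hdiv.eventually_gt_atTop 0).mono fun _ h => h.ne')
    fun lam hlam => tendsto_ellTilde_mul_div_of_one_lt hpos hdiv hratio hlam

theorem integral_of_slowly_varying_is_slowly_varying (B : ℝ) (ℓ : ℝ → ℝ)
    (hmeas : Measurable ℓ)
    (hpos : ∀ x, B ≤ x → 0 < ℓ x)
    (hloc : ∀ x : ℝ, ∃ C : ℝ, ∀ y ∈ Set.Icc B x, ℓ y ≤ C)
    (hsv : ∀ lam : ℝ, 0 < lam →
      Tendsto (fun x => ℓ (lam * x) / ℓ x) atTop (nhds 1))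
    (hdiv : Tendsto (fun x => ∫ s in Set.Ioc B x, ℓ s / s) atTop atTop) :
    ∀ lam : ℝ, 0 < lam →
      Tendsto (fun x => (∫ s in Set.Ioc B (lam * x), ℓ s / s) /
        ∫ s in Set.Ioc B x, ℓ s / s) atTop (nhds 1) :=
  integral_of_slowly_varying_is_slowly_varying_general B ℓ hmeas hpos hsv hdiv
end
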